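/- Every ground type of IMLL₂ is an erasable type: for every ground type A there exists a linear λ-term E_A of type A ⊸ 1 such that E_A V →βη* I for every value V of type A. -/

import Mathlib

/-!
Core development: untyped λ-terms in de Bruijn representation, linearity,
β- and η-reduction, as in the paper "A type-assignment of linear erasure
and duplication" (Curzi, Roversi).
-/

namespace LEMPaper

/-- Untyped λ-terms, de Bruijn representation. -/
inductive Lam : Type
  | var : ℕ → Lam
  | app : Lam → Lam → Lam
  | lam : Lam → Lam
  deriving DecidableEq

namespace Lam

/-- Lift a renaming under a binder. -/
def liftRen (ρ : ℕ → ℕ) : ℕ → ℕ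
  | 0 => 0
  | n + 1 => ρ n + 1

/-- Apply a renaming of free variables. -/
def rename (ρ : ℕ → ℕ) : Lam → Lam
  | var n => var (ρ n)
  | app M N => app (M.rename ρ) (N.rename ρ)
  | lam M => lam (M.rename (liftRen ρ))

/-- Shift all free variables up by one. -/
def shift (M : Lam) : Lam := M.rename Nat.succ

/-- Lift a simultaneous substitution under a binder. -/
def liftSub (s : ℕ → Lam) : ℕ → Lam
  | 0 => var 0
  | n + 1 => (s n).shift

/-- Simultaneous (capture-avoiding) substitution. -/
def substAll (s : ℕ → Lam) : Lam → Lam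
  | var n => s n
  | app M N => app (M.substAll s) (N.substAll s)
  | lam M => lam (M.substAll (liftSub s))

/-- Capture-avoiding substitution `M[N/n]`; the variables above `n` are decremented. -/
def subst (M : Lam) (n : ℕ) (N : Lam) : Lam :=
  M.substAll (fun m => if m < n then var m else if m = n then N else var (m - 1))

/-- Number of (free) occurrences of the variable `n` in a term. -/
def countFree : Lam → ℕ → ℕ
  | var m, n => if m = n then 1 else 0
  | app M N, n => M.countFree n + N.countFree n
  | lam M, n => M.countFree (n + 1)

/-- A term is closed when it has no free variables. -/
def Closed (M : Lam) : Prop := ∀ n, M.countFree n = 0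

/-- A λ-term is linear if all of its free variables occur exactly once in it and
every abstraction binds a variable occurring exactly once in its (linear) body. -/
def Linear : Lam → Prop
  | var _ => True
  | app M N => M.Linear ∧ N.Linear ∧ ∀ n, M.countFree n = 0 ∨ N.countFree n = 0
  | lam M => M.Linear ∧ M.countFree 0 = 1

/-- The identity combinator `I = λx.x`. -/
def I : Lam := lam (var 0)

/-- The linear pairing `⟨M,N⟩ = λz. z M N`. -/
def pair (M N : Lam) : Lam := lam (app (app (var 0) M.shift) N.shift)

/-- The size (number of nodes of the syntax tree) of a term. -/
def size : Lam → ℕ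
  | var _ => 1
  | app M N => M.size + N.size + 1
  | lam M => M.size + 1

/-- One-step β-reduction, closed under arbitrary contexts. -/
inductive Beta : Lam → Lam → Prop
  | beta (M N : Lam) : Beta (app (lam M) N) (M.subst 0 N)
  | appL {M M'} (N : Lam) : Beta M M' → Beta (app M N) (app M' N)
  | appR (M : Lam) {N N'} : Beta N N' → Beta (app M N) (app M N')
  | lam {M M'} : Beta M M' → Beta (lam M) (lam M')

/-- One-step η-reduction `λx.Mx →η M` (x not free in M), closed under contexts. -/
inductive Eta : Lam → Lam → Prop
  | eta (M : Lam) : Eta (lam (app M.shift (var 0))) M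
  | appL {M M'} (N : Lam) : Eta M M' → Eta (app M N) (app M' N)
  | appR (M : Lam) {N N'} : Eta N N' → Eta (app M N) (app M N')
  | lam {M M'} : Eta M M' → Eta (lam M) (lam M')

/-- One-step βη-reduction. -/
def BetaEta (M N : Lam) : Prop := Beta M N ∨ Eta M N

/-- A value is a closed linear λ-term in β-normal form. -/
def IsValue (V : Lam) : Prop := V.Linear ∧ V.Closed ∧ ∀ W, ¬ Beta V W

end Lam

end LEMPaper

namespace LEMPaper

/-- Types of second-order intuitionistic multiplicative linear logic `IMLL₂`:
`A ::= α | A ⊸ B | ∀α.A` (type variables in de Bruijn representation). -/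
inductive Ty : Type
  | var : ℕ → Ty
  | arr : Ty → Ty → Ty
  | all : Ty → Ty
  deriving DecidableEq

namespace Ty

def liftRen (ρ : ℕ → ℕ) : ℕ → ℕ
  | 0 => 0
  | n + 1 => ρ n + 1

def rename (ρ : ℕ → ℕ) : Ty → Ty
  | var n => var (ρ n)
  | arr A B => arr (A.rename ρ) (B.rename ρ)
  | all A => all (A.rename (liftRen ρ))

/-- Shift all free type variables up by one. -/
def shift (A : Ty) : Ty := A.rename Nat.succ

def liftSub (s : ℕ → Ty) : ℕ → Ty
  | 0 => var 0
  | n + 1 => (s n).shift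

def substAll (s : ℕ → Ty) : Ty → Ty
  | var n => s n
  | arr A B => arr (A.substAll s) (B.substAll s)
  | all A => all (A.substAll (liftSub s))

/-- `A.instTop B` instantiates the outermost bound type variable of `A` with `B`
(i.e. `A⟨B/α⟩` where `α` is the variable bound by an enclosing `∀`). -/
def instTop (A B : Ty) : Ty :=
  A.substAll (fun n => match n with | 0 => B | m + 1 => var m)

/-- All free type variables are `< d`. -/
def ClosedAt : Ty → ℕ → Prop
  | var n, d => n < d
  | arr A B, d => A.ClosedAt d ∧ B.ClosedAt d
  | all A, d => A.ClosedAt (d + 1)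

/-- A type is closed when it has no free type variables. -/
def Closed (A : Ty) : Prop := A.ClosedAt 0

/-- `isPiSigma A true` means `A` is a `Π₁`-type, `isPiSigma A false` that `A` is a
`Σ₁`-type, following the mutual grammar
`Π₁ ::= α | Σ₁ ⊸ Π₁ | ∀α.Π₁` and `Σ₁ ::= α | Π₁ ⊸ Σ₁`. -/
def isPiSigma : Ty → Bool → Prop
  | var _, _ => True
  | arr A B, b => A.isPiSigma (!b) ∧ B.isPiSigma b
  | all A, b => b = true ∧ A.isPiSigma true

/-- A ground type is a closed `Π₁`-type. -/
def Ground (A : Ty) : Prop := A.isPiSigma true ∧ A.Closed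

/-- The unity type `1 = ∀α.(α ⊸ α)`. -/
def one : Ty := all (arr (var 0) (var 0))

/-- The tensor product `A ⊗ B = ∀α.(A ⊸ B ⊸ α) ⊸ α`. -/
def tensor (A B : Ty) : Ty :=
  all (arr (arr A.shift (arr B.shift (var 0))) (var 0))

end Ty

/-- Typing contexts for the linear λ-calculus: position `i` records the type of the
de Bruijn variable `i` (`none` meaning that the variable is not available). -/
abbrev Ctx := List (Option Ty)

/-- Splitting of a linear context into two disjoint parts. -/
inductive Split : Ctx → Ctx → Ctx → Prop
  | nil : Split [] [] []
  | left {Γ Γ₁ Γ₂ A} : Split Γ Γ₁ Γ₂ → Split (some A :: Γ) (some A :: Γ₁) (none :: Γ₂)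
  | right {Γ Γ₁ Γ₂ A} : Split Γ Γ₁ Γ₂ → Split (some A :: Γ) (none :: Γ₁) (some A :: Γ₂)
  | skip {Γ Γ₁ Γ₂} : Split Γ Γ₁ Γ₂ → Split (none :: Γ) (none :: Γ₁) (none :: Γ₂)

/-- The context contains exactly one (available) assumption, of type `A`, at `n`. -/
def OnlyAt (Γ : Ctx) (n : ℕ) (A : Ty) : Prop :=
  Γ[n]? = some (some A) ∧ ∀ m, m ≠ n → ∀ B, Γ[m]? ≠ some (some B)

/-- Type assignment of `IMLL₂` for the linear λ-calculus: variables are used exactly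
once (ax and the context splitting of the application rule enforce linearity),
plus the second-order rules for `∀` (with the usual eigenvariable condition,
rendered by shifting the context in `allI`). -/
inductive HasTy : Ctx → Lam → Ty → Prop
  | var {Γ n A} : OnlyAt Γ n A → HasTy Γ (.var n) A
  | lam {Γ M A B} : HasTy (some A :: Γ) M B → HasTy Γ (.lam M) (A.arr B)
  | app {Γ Γ₁ Γ₂ M N A B} : Split Γ Γ₁ Γ₂ →
      HasTy Γ₁ M (A.arr B) → HasTy Γ₂ N A → HasTy Γ (.app M N) B
  | allI {Γ M A} : HasTy (Γ.map (Option.map Ty.shift)) M A → HasTy Γ M (.all A)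
  | allE {Γ M A} (B : Ty) : HasTy Γ M (.all A) → HasTy Γ M (A.instTop B)

end LEMPaper

namespace LEMPaper

/-!
For a `Π₁`-type `A` the eraser `E_A` is built together with a closed inhabitant `D_B` of
every `Σ₁`-type `B` (free type variables read as `1`): `E_α = D_α = I`,
`E_{B ⊸ A} = λx. E_A (x D_B)`, `E_{∀α.A} = E_A` (up to η) and `D_{A ⊸ B} = λx. E_A x D_B`.
That `E_A V` reduces to `I` is proved semantically: types are read as predicates on terms
closed under βη-expansion, every type variable as "reduces to `I`". Every typable term
realizes its type, `E_A` sends realizers of `A` to terms reducing to `I`, and `D_B`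
realizes `B`.
-/

def scons {α : Sort*} (a : α) (f : ℕ → α) : ℕ → α
  | 0 => a
  | n + 1 => f n

theorem scons_const {α : Sort*} (a : α) : (scons a fun _ => a) = fun _ => a :=
  funext fun n => by cases n <;> rfl

namespace Lam

theorem rename_rename (ρ ρ' : ℕ → ℕ) (M : Lam) :
    (M.rename ρ').rename ρ = M.rename (ρ ∘ ρ') := by
  induction M generalizing ρ ρ' with
  | var n => rfl
  | app M N ihM ihN => simp only [rename, ihM, ihN]
  | lam M ih =>
    simp only [rename, ih]
    congr 2; funext n; cases n <;> rfl

theorem substAll_rename (s : ℕ → Lam) (ρ : ℕ → ℕ) (M : Lam) :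
    (M.rename ρ).substAll s = M.substAll (s ∘ ρ) := by
  induction M generalizing s ρ with
  | var n => rfl
  | app M N ihM ihN => simp only [rename, substAll, ihM, ihN]
  | lam M ih =>
    simp only [rename, substAll, ih]
    congr 2; funext n; cases n <;> rfl

theorem rename_substAll (ρ : ℕ → ℕ) (s : ℕ → Lam) (M : Lam) :
    (M.substAll s).rename ρ = M.substAll fun n => (s n).rename ρ := by
  induction M generalizing s ρ with
  | var n => rfl
  | app M N ihM ihN => simp only [rename, substAll, ihM, ihN]
  | lam M ih =>
    simp only [rename, substAll, ih]
    congr 2; funext n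
    cases n with
    | zero => rfl
    | succ n => simp only [liftSub, shift, rename_rename]; rfl

theorem substAll_substAll (s t : ℕ → Lam) (M : Lam) :
    (M.substAll t).substAll s = M.substAll fun n => (t n).substAll s := by
  induction M generalizing s t with
  | var n => rfl
  | app M N ihM ihN => simp only [substAll, ihM, ihN]
  | lam M ih =>
    simp only [substAll, ih]
    congr 2; funext n
    cases n with
    | zero => rfl
    | succ n => simp only [liftSub, shift, substAll_rename, rename_substAll]; rfl

theorem substAll_eq_self {s : ℕ → Lam} {M : Lam}
    (h : ∀ n, M.countFree n ≠ 0 → s n = var n) : M.substAll s = M := by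
  induction M generalizing s with
  | var n => exact h n (by simp [countFree])
  | app M N ihM ihN =>
    simp only [substAll]
    rw [ihM fun n hn => h n (by simp only [countFree]; omega),
      ihN fun n hn => h n (by simp only [countFree]; omega)]
  | lam M ih =>
    refine congrArg lam (ih fun n hn => ?_)
    cases n with
    | zero => rfl
    | succ n => simp only [liftSub, h n hn]; rfl

theorem substAll_var (M : Lam) : M.substAll var = M :=
  substAll_eq_self fun _ _ => rfl

theorem subst_of_closed {M : Lam} (h : M.Closed) (n : ℕ) (U : Lam) : M.subst n U = M :=
  substAll_eq_self fun m hm => absurd (h m) hm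

theorem subst_zero_substAll_liftSub (σ : ℕ → Lam) (U M : Lam) :
    (M.substAll (liftSub σ)).subst 0 U = M.substAll (scons U σ) := by
  rw [subst, substAll_substAll]
  congr 1; funext n
  cases n with
  | zero => rfl
  | succ n =>
    simp only [liftSub, shift, substAll_rename]
    exact substAll_eq_self fun m _ => by simp

@[simp] theorem subst_app (M N : Lam) (n : ℕ) (U : Lam) :
    (app M N).subst n U = app (M.subst n U) (N.subst n U) := rfl

@[simp] theorem subst_var_self (n : ℕ) (U : Lam) : (var n).subst n U = U := by
  simp [subst, substAll]

theorem betaEta_beta {M N T : Lam} (h : M.subst 0 N = T) : BetaEta (app (lam M) N) T :=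
  h ▸ Or.inl (Beta.beta M N)

theorem BetaEta.appL {M M' : Lam} (N : Lam) (h : BetaEta M M') :
    BetaEta (app M N) (app M' N) :=
  h.imp (.appL N) (.appL N)

theorem reflTransGen_betaEta_appL {M M' : Lam} (N : Lam)
    (h : Relation.ReflTransGen BetaEta M M') :
    Relation.ReflTransGen BetaEta (app M N) (app M' N) :=
  h.lift (fun X => app X N) fun _ _ => BetaEta.appL N

end Lam

namespace Ty

theorem rename_rename (ρ ρ' : ℕ → ℕ) (A : Ty) :
    (A.rename ρ').rename ρ = A.rename (ρ ∘ ρ') := by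
  induction A generalizing ρ ρ' with
  | var n => rfl
  | arr A B ihA ihB => simp only [rename, ihA, ihB]
  | all A ih =>
    simp only [rename, ih]
    congr 2; funext n; cases n <;> rfl

theorem substAll_rename (s : ℕ → Ty) (ρ : ℕ → ℕ) (A : Ty) :
    (A.rename ρ).substAll s = A.substAll (s ∘ ρ) := by
  induction A generalizing s ρ with
  | var n => rfl
  | arr A B ihA ihB => simp only [rename, substAll, ihA, ihB]
  | all A ih =>
    simp only [rename, substAll, ih]
    congr 2; funext n; cases n <;> rfl

theorem rename_substAll (ρ : ℕ → ℕ) (s : ℕ → Ty) (A : Ty) :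
    (A.substAll s).rename ρ = A.substAll fun n => (s n).rename ρ := by
  induction A generalizing s ρ with
  | var n => rfl
  | arr A B ihA ihB => simp only [rename, substAll, ihA, ihB]
  | all A ih =>
    simp only [rename, substAll, ih]
    congr 2; funext n
    cases n with
    | zero => rfl
    | succ n => simp only [liftSub, shift, rename_rename]; rfl

theorem substAll_substAll (s t : ℕ → Ty) (A : Ty) :
    (A.substAll t).substAll s = A.substAll fun n => (t n).substAll s := by
  induction A generalizing s t with
  | var n => rfl
  | arr A B ihA ihB => simp only [substAll, ihA, ihB]
  | all A ih =>
    simp only [substAll, ih]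
    congr 2; funext n
    cases n with
    | zero => rfl
    | succ n => simp only [liftSub, shift, substAll_rename, rename_substAll]; rfl

theorem substAll_eq_self_of_closedAt {A : Ty} {d : ℕ} (hA : A.ClosedAt d) {s : ℕ → Ty}
    (hs : ∀ n < d, s n = var n) : A.substAll s = A := by
  induction A generalizing d s with
  | var n => exact hs n hA
  | arr A B ihA ihB => rw [substAll, ihA hA.1 hs, ihB hA.2 hs]
  | all A ih =>
    refine congrArg all (ih hA fun n hn => ?_)
    cases n with
    | zero => rfl
    | succ n => simp only [liftSub, hs n (by omega)]; rfl

theorem substAll_of_closed {A : Ty} (hA : A.Closed) (s : ℕ → Ty) : A.substAll s = A :=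
  substAll_eq_self_of_closedAt hA fun n hn => absurd hn n.not_lt_zero

def substOne (A : Ty) : Ty := A.substAll fun _ => one

theorem instTop_one_substAll_liftSub (A : Ty) :
    (A.substAll (liftSub fun _ => one)).instTop one = A.substOne := by
  rw [instTop, substAll_substAll]
  congr 1; funext n; cases n <;> rfl

end Ty

mutual
def eraser : Ty → Lam
  | .var _ => .I
  | .arr A B => .lam (.app (eraser B) (.app (.var 0) (dummy A)))
  | .all A => .lam (.app (eraser A) (.var 0))

def dummy : Ty → Lam
  | .var _ => .I
  | .arr A B => .lam (.app (.app (eraser A) (.var 0)) (dummy B))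
  | .all _ => .I
end

theorem closed_eraser_and_dummy (A : Ty) : (eraser A).Closed ∧ (dummy A).Closed := by
  induction A with
  | var => exact ⟨fun _ => rfl, fun _ => rfl⟩
  | arr A B ihA ihB =>
    exact ⟨fun n => by simp [eraser, Lam.countFree, ihB.1 (n + 1), ihA.2 (n + 1)],
      fun n => by simp [dummy, Lam.countFree, ihA.1 (n + 1), ihB.2 (n + 1)]⟩
  | all A ih => exact ⟨fun n => by simp [eraser, Lam.countFree, ih.1 (n + 1)], fun _ => rfl⟩

theorem closed_eraser (A : Ty) : (eraser A).Closed := (closed_eraser_and_dummy A).1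

theorem closed_dummy (A : Ty) : (dummy A).Closed := (closed_eraser_and_dummy A).2

theorem linear_eraser_and_dummy (A : Ty) : (eraser A).Linear ∧ (dummy A).Linear := by
  induction A with
  | var => exact ⟨⟨trivial, rfl⟩, ⟨trivial, rfl⟩⟩
  | arr A B ihA ihB =>
    refine ⟨⟨⟨ihB.1, ⟨trivial, ihA.2, fun n => .inr (closed_dummy A n)⟩,
      fun n => .inl (closed_eraser B n)⟩, ?_⟩,
      ⟨⟨⟨ihA.1, trivial, fun n => .inl (closed_eraser A n)⟩, ihB.2,
      fun n => .inr (closed_dummy B n)⟩, ?_⟩⟩ <;>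
    simp [Lam.countFree, closed_eraser _ 0, closed_dummy _ 0]
  | all A ih =>
    refine ⟨⟨⟨ih.1, trivial, fun n => .inl (closed_eraser A n)⟩, ?_⟩, ⟨trivial, rfl⟩⟩
    simp [Lam.countFree, closed_eraser A 0]

theorem Split.symm {Γ Γ₁ Γ₂ : Ctx} (h : Split Γ Γ₁ Γ₂) : Split Γ Γ₂ Γ₁ := by
  induction h with
  | nil => exact .nil
  | left _ ih => exact .right ih
  | right _ ih => exact .left ih
  | skip _ ih => exact .skip ih

theorem Split.getElem?_left {Γ Γ₁ Γ₂ : Ctx} (h : Split Γ Γ₁ Γ₂) {n : ℕ} {B : Ty}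
    (hn : Γ₁[n]? = some (some B)) : Γ[n]? = some (some B) := by
  induction h generalizing n with
  | nil => simp at hn
  | left _ ih | right _ ih | skip _ ih =>
    cases n with
    | zero => simp_all
    | succ n => simpa using ih (by simpa using hn)

theorem Split.getElem?_right {Γ Γ₁ Γ₂ : Ctx} (h : Split Γ Γ₁ Γ₂) {n : ℕ} {B : Ty}
    (hn : Γ₂[n]? = some (some B)) : Γ[n]? = some (some B) :=
  h.symm.getElem?_left hn

theorem Split.append_none {Γ Γ₁ Γ₂ : Ctx} (h : Split Γ Γ₁ Γ₂) :
    Split (Γ ++ [none]) (Γ₁ ++ [none]) (Γ₂ ++ [none]) := by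
  induction h with
  | nil => exact .skip .nil
  | left _ ih => exact .left ih
  | right _ ih => exact .right ih
  | skip _ ih => exact .skip ih

theorem getElem?_append_none_eq_some_some {Γ : Ctx} {n : ℕ} {B : Ty} :
    (Γ ++ [none])[n]? = some (some B) ↔ Γ[n]? = some (some B) := by
  rw [List.getElem?_append]
  split
  · rfl
  · rw [List.getElem?_eq_none (by omega : Γ.length ≤ n)]
    simp [List.getElem?_singleton]

theorem OnlyAt.append_none {Γ : Ctx} {n : ℕ} {A : Ty} (h : OnlyAt Γ n A) :
    OnlyAt (Γ ++ [none]) n A :=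
  ⟨getElem?_append_none_eq_some_some.2 h.1,
    fun m hm B hB => h.2 m hm B (getElem?_append_none_eq_some_some.1 hB)⟩

theorem HasTy.append_none {Γ : Ctx} {M : Lam} {A : Ty} (h : HasTy Γ M A) :
    HasTy (Γ ++ [none]) M A := by
  induction h with
  | var h => exact .var h.append_none
  | lam _ ih => exact .lam ih
  | app hs _ _ ih₁ ih₂ => exact .app hs.append_none ih₁ ih₂
  | allI _ ih => exact .allI (by simpa using ih)
  | allE B _ ih => exact .allE B ih

theorem onlyAt_singleton (A : Ty) : OnlyAt [some A] 0 A :=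
  ⟨rfl, fun m hm B => by cases m with
    | zero => exact absurd rfl hm
    | succ m => simp⟩

theorem hasTy_I_one : HasTy [] Lam.I Ty.one :=
  .allI (.lam (.var (onlyAt_singleton _)))

theorem hasTy_eraser_and_dummy (A : Ty) :
    (A.isPiSigma true → HasTy [] (eraser A) (A.substOne.arr Ty.one)) ∧
    (A.isPiSigma false → HasTy [] (dummy A) A.substOne) := by
  induction A with
  | var n => exact ⟨fun _ => .lam (.var (onlyAt_singleton _)), fun _ => hasTy_I_one⟩
  | arr A B ihA ihB =>
    constructor
    · rintro ⟨hA, hB⟩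
      exact .lam (.app (.right .nil) (ihB.1 hB).append_none
        (.app (.left .nil) (.var (onlyAt_singleton _)) (ihA.2 hA).append_none))
    · rintro ⟨hA, hB⟩
      exact .lam (.app (.left .nil)
        (.allE B.substOne (.app (.right .nil) (ihA.1 hA).append_none
          (.var (onlyAt_singleton _))))
        (ihB.2 hB).append_none)
  | all A ih =>
    refine ⟨fun ⟨_, hA⟩ => .lam (.app (.right .nil) (ih.1 hA).append_none ?_), fun ⟨h, _⟩ => ?_⟩
    · have h := HasTy.allE Ty.one (.var (onlyAt_singleton (Ty.all A).substOne))
      rwa [Ty.instTop_one_substAll_liftSub] at h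
    · cases h

def ClosedUnderExpansion (P : Lam → Prop) : Prop :=
  ∀ T T', Lam.BetaEta T T' → P T' → P T

theorem ClosedUnderExpansion.of_reflTransGen {P : Lam → Prop} (hP : ClosedUnderExpansion P)
    {T T' : Lam} (h : Relation.ReflTransGen Lam.BetaEta T T') (hT' : P T') : P T := by
  induction h with
  | refl => exact hT'
  | tail _ hstep ih => exact ih (hP _ _ hstep hT')

def interp : Ty → (ℕ → Lam → Prop) → Lam → Prop
  | .var n, ρ => ρ n
  | .arr A B, ρ => fun T => ∀ U, interp A ρ U → interp B ρ (T.app U)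
  | .all A, ρ => fun T => ∀ C, ClosedUnderExpansion C → interp A (scons C ρ) T

theorem closedUnderExpansion_interp {A : Ty} {ρ : ℕ → Lam → Prop}
    (hρ : ∀ n, ClosedUnderExpansion (ρ n)) : ClosedUnderExpansion (interp A ρ) := by
  induction A generalizing ρ with
  | var n => exact hρ n
  | arr A B _ ihB =>
    exact fun T T' hTT' hT' U hU => ihB hρ _ _ (hTT'.appL U) (hT' U hU)
  | all A ih =>
    refine fun T T' hTT' hT' C hC => ih (fun n => ?_) _ _ hTT' (hT' C hC)
    cases n with
    | zero => exact hC
    | succ n => exact hρ n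

theorem interp_rename (A : Ty) (r : ℕ → ℕ) (ρ : ℕ → Lam → Prop) :
    interp (A.rename r) ρ = interp A (ρ ∘ r) := by
  induction A generalizing r ρ with
  | var n => rfl
  | arr A B ihA ihB => simp only [Ty.rename, interp, ihA, ihB]
  | all A ih =>
    have scons_comp_liftRen : ∀ C : Lam → Prop, scons C ρ ∘ Ty.liftRen r = scons C (ρ ∘ r) :=
      fun C => funext fun n => by cases n <;> rfl
    simp only [Ty.rename, interp, ih, scons_comp_liftRen]

theorem interp_substAll (A : Ty) (s : ℕ → Ty) (ρ : ℕ → Lam → Prop) :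
    interp (A.substAll s) ρ = interp A fun n => interp (s n) ρ := by
  induction A generalizing s ρ with
  | var n => rfl
  | arr A B ihA ihB => simp only [Ty.substAll, interp, ihA, ihB]
  | all A ih =>
    have interp_liftSub : ∀ C : Lam → Prop,
        (fun n => interp (Ty.liftSub s n) (scons C ρ)) = scons C fun n => interp (s n) ρ := by
      refine fun C => funext fun n => ?_
      cases n with
      | zero => rfl
      | succ n => exact interp_rename (s n) Nat.succ (scons C ρ)
    simp only [Ty.substAll, interp, ih, interp_liftSub]

theorem interp_instTop (A B : Ty) (ρ : ℕ → Lam → Prop) :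
    interp (A.instTop B) ρ = interp A (scons (interp B ρ) ρ) := by
  rw [Ty.instTop, interp_substAll]
  congr 1; funext n; cases n <;> rfl

theorem HasTy.sound {Γ : Ctx} {M : Lam} {A : Ty} (h : HasTy Γ M A)
    {ρ : ℕ → Lam → Prop} (hρ : ∀ n, ClosedUnderExpansion (ρ n))
    {σ : ℕ → Lam} (hσ : ∀ n B, Γ[n]? = some (some B) → interp B ρ (σ n)) :
    interp A ρ (M.substAll σ) := by
  induction h generalizing ρ σ with
  | var h => exact hσ _ _ h.1
  | lam _ ih =>
    refine fun U hU => closedUnderExpansion_interp hρ _ _ (Lam.betaEta_beta rfl) ?_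
    rw [Lam.subst_zero_substAll_liftSub]
    refine ih hρ fun n B hn => ?_
    cases n with
    | zero => cases hn; exact hU
    | succ n => exact hσ n B hn
  | app hs _ _ ih₁ ih₂ =>
    exact ih₁ hρ (fun n B h => hσ n B (hs.getElem?_left h)) _
      (ih₂ hρ fun n B h => hσ n B (hs.getElem?_right h))
  | @allI Γ M A _ ih =>
    refine fun C hC => ih (fun n => ?_) fun n B hn => ?_
    · cases n with
      | zero => exact hC
      | succ n => exact hρ n
    · obtain ⟨B₀, hB₀, rfl⟩ : ∃ B₀, Γ[n]? = some (some B₀) ∧ B₀.shift = B := by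
        simpa [List.getElem?_map] using hn
      rw [Ty.shift, interp_rename]
      exact hσ n B₀ hB₀
  | allE B _ ih =>
    rw [interp_instTop]
    exact ih hρ hσ (interp B ρ) (closedUnderExpansion_interp hρ)

def ReducesToI (T : Lam) : Prop := Relation.ReflTransGen Lam.BetaEta T Lam.I

theorem closedUnderExpansion_reducesToI : ClosedUnderExpansion ReducesToI :=
  fun _ _ h h' => Relation.ReflTransGen.head h h'

theorem eraser_reducesToI_and_dummy_interp (A : Ty) :
    (A.isPiSigma true →
      ∀ T, interp A (fun _ => ReducesToI) T → ReducesToI (.app (eraser A) T)) ∧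
    (A.isPiSigma false → interp A (fun _ => ReducesToI) (dummy A)) := by
  induction A with
  | var n => exact ⟨fun _ T hT => .head (Lam.betaEta_beta (by simp)) hT, fun _ => .refl⟩
  | arr A B ihA ihB =>
    constructor
    · rintro ⟨hA, hB⟩ T hT
      refine .head (Lam.betaEta_beta ?_) (ihB.1 hB _ (hT _ (ihA.2 hA)))
      simp [Lam.subst_of_closed, closed_eraser, closed_dummy]
    · rintro ⟨hA, hB⟩ U hU
      have erase_argument : ReducesToI (.app (eraser A) U) := ihA.1 hA U hU
      have dummy_app : Relation.ReflTransGen Lam.BetaEta (.app (dummy (A.arr B)) U) (dummy B) :=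
        .head (Lam.betaEta_beta (by simp [Lam.subst_of_closed, closed_eraser, closed_dummy]))
          ((Lam.reflTransGen_betaEta_appL (dummy B) erase_argument).tail
            (Lam.betaEta_beta (by simp)))
      exact (closedUnderExpansion_interp fun _ => closedUnderExpansion_reducesToI).of_reflTransGen
        dummy_app (ihB.2 hB)
  | all A ih =>
    refine ⟨fun ⟨_, hA⟩ T hT => ?_, fun ⟨h, _⟩ => by cases h⟩
    have hT : interp A (fun _ => ReducesToI) T := by
      simpa only [scons_const] using hT ReducesToI closedUnderExpansion_reducesToI
    refine .head (Lam.betaEta_beta ?_) (ih.1 hA T hT)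
    simp [Lam.subst_of_closed, closed_eraser]

/-- Theorem 2.1: every ground type `A` of `IMLL₂` is erasable:
there is a linear λ-term `E_A` of type `A ⊸ 1` such that `E_A V →βη* I` for
every value `V` (closed, β-normal, linear λ-term) of type `A`. -/
theorem ground_type_erasable (A : Ty) (hA : Ty.Ground A) :
    ∃ E : Lam, E.Linear ∧ HasTy [] E (A.arr Ty.one) ∧
      ∀ V : Lam, Lam.IsValue V → HasTy [] V A →
        Relation.ReflTransGen Lam.BetaEta (Lam.app E V) Lam.I := by
  obtain ⟨hPi, hClosed⟩ := hA
  refine ⟨eraser A, (linear_eraser_and_dummy A).1, ?_, fun V _ hV => ?_⟩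
  · simpa only [Ty.substOne, Ty.substAll_of_closed hClosed] using
      (hasTy_eraser_and_dummy A).1 hPi
  · have hV : interp A (fun _ => ReducesToI) V := by
      simpa only [Lam.substAll_var] using
        hV.sound (fun _ => closedUnderExpansion_reducesToI) (σ := Lam.var) (by simp)
    exact (eraser_reducesToI_and_dummy_interp A).1 hPi V hV

end LEMPaper
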